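/- arXiv:1404.2831 — 4 statements merged into one kernel-verified Lean document; each statement's English description precedes it below -/
import Mathlib

section
/- Consider the triangle graph T with vertex set {A,B,C} and edges BC, CA, AB, where edge BC is open with probability p0, CA with probability p1, AB with probability p2, independently; and the star graph S with vertex set {A,B,C,O} and edges OA, OB, OC, where OA is open with probability 1−p0, OB with probability 1−p1, OC with probability 1−p2, independently. If p0, p1, p2 ∈ [0,1) satisfy p0 + p1 + p2 − p0·p1·p2 = 1, then the random vector (1_{A↔B}, 1_{B↔C}, 1_{C↔A}) of indicators of open connections among A, B, C has the same distribution under the percolation measure on T as under the percolation measure on S. -/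
open Finset

/-- Connectivity indicators `(1_{A↔B}, 1_{B↔C}, 1_{C↔A})` in the triangle `T` with
vertices `{A,B,C}`, where `ω 0` is the state of edge `BC`, `ω 1` that of `CA`,
and `ω 2` that of `AB`. -/
def triConn (ω : Fin 3 → Bool) : Bool × Bool × Bool :=
  (ω 2 || (ω 1 && ω 0), ω 0 || (ω 2 && ω 1), ω 1 || (ω 0 && ω 2))

/-- Connectivity indicators `(1_{A↔B}, 1_{B↔C}, 1_{C↔A})` in the star `S` with
vertices `{A,B,C,O}`, where `η 0` is the state of edge `OA`, `η 1` that of `OB`,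
and `η 2` that of `OC`. -/
def starConn (η : Fin 3 → Bool) : Bool × Bool × Bool :=
  (η 0 && η 1, η 1 && η 2, η 2 && η 0)

/-- Probability of the configuration `ω` of the triangle: edge `BC` is open with
probability `p 0`, `CA` with probability `p 1`, `AB` with probability `p 2`,
independently. -/
noncomputable def triProb (p : Fin 3 → ℝ) (ω : Fin 3 → Bool) : ℝ :=
  ∏ i, (if ω i then p i else 1 - p i)

/-- Probability of the configuration `η` of the star: edge `OA` is open with
probability `1 - p 0`, `OB` with probability `1 - p 1`, `OC` with probability
`1 - p 2`, independently. -/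
noncomputable def starProb (p : Fin 3 → ℝ) (η : Fin 3 → Bool) : ℝ :=
  ∏ i, (if η i then 1 - p i else p i)

/-!
Both connectivity vectors take only five values: no connection, exactly one connected pair, or
full connection. The event that only `A ↔ B` holds has probability `p 2 (1 - p 0) (1 - p 1)` in
both graphs, for every `p`. The other two events are where `κ = 0` enters: no connection has
probability `∏ (1 - p i)` in `T` but `P(at most one edge of S open) = e₂(p) - 2 e₃(p)` in `S`,
full connection swaps the two expressions, and `κ = 0` is exactly the identity
`∏ (1 - p i) = e₂(p) - 2 e₃(p)` (`eₖ` the elementary symmetric polynomials).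
-/

theorem Fintype.sum_pi_fin_succ {α M : Type*} [Fintype α] [AddCommMonoid M] {n : ℕ}
    (f : (Fin (n + 1) → α) → M) : ∑ ω, f ω = ∑ a, ∑ ω, f (Fin.cons a ω) := by
  rw [← Fintype.sum_prod_type']
  exact (Fintype.sum_equiv (Fin.consEquiv fun _ => α) _ f fun _ => rfl).symm

theorem Fintype.sum_pi_fin_three {α M : Type*} [Fintype α] [AddCommMonoid M]
    (f : (Fin 3 → α) → M) : ∑ ω, f ω = ∑ a, ∑ b, ∑ c, f ![a, b, c] := by
  simp only [Fintype.sum_pi_fin_succ, Fintype.sum_unique]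
  rfl

theorem star_triangle_percolation_general (p : Fin 3 → ℝ)
    (hκ : p 0 + p 1 + p 2 - p 0 * p 1 * p 2 = 1)
    (abc : Bool × Bool × Bool) :
    (∑ ω : Fin 3 → Bool, if triConn ω = abc then triProb p ω else 0) =
    (∑ η : Fin 3 → Bool, if starConn η = abc then starProb p η else 0) := by
  have key : (1 - p 0) * (1 - p 1) * (1 - p 2) =
      p 0 * p 1 + p 1 * p 2 + p 2 * p 0 - 2 * (p 0 * p 1 * p 2) := by
    linear_combination -hκ
  simp only [Fintype.sum_pi_fin_three, Fintype.sum_bool, triProb, starProb, Fin.prod_univ_three,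
    Matrix.cons_val]
  rcases abc with ⟨_ | _, _ | _, _ | _⟩ <;> simp +decide only [reduceIte, add_zero, zero_add]
  case false.false.false => linear_combination key
  case true.true.true => linear_combination -key

/-- **Star–triangle transformation for bond percolation.** If
`p 0 + p 1 + p 2 - p 0 * p 1 * p 2 = 1`, then the vector of connectivity
indicators among `A, B, C` has the same distribution under the percolation
measure on the triangle `T` as under the percolation measure on the star `S`. -/
theorem star_triangle_percolation (p : Fin 3 → ℝ)
    (hp : ∀ i, 0 ≤ p i ∧ p i < 1)
    (hκ : p 0 + p 1 + p 2 - p 0 * p 1 * p 2 = 1)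
    (abc : Bool × Bool × Bool) :
    (∑ ω : Fin 3 → Bool, if triConn ω = abc then triProb p ω else 0) =
    (∑ η : Fin 3 → Bool, if starConn η = abc then starProb p η else 0) :=
  star_triangle_percolation_general p hκ abc
end

section
/- Let θ0, θ1, θ2 ∈ (0,π) satisfy θ0 + θ1 + θ2 = 2π, and for i = 0,1,2 define p_i ∈ (0,1) by p_i/(1−p_i) = sin((π−θ_i)/3)/sin(θ_i/3). Then p0 + p1 + p2 − p0·p1·p2 = 1. -/
/-!
Write `b i = (π - θ i) / 3`, so that `θ i / 3 = π / 3 - b i` and the angle condition becomes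
`b 0 + b 1 + b 2 = π / 3`. In terms of the odds `r i = p i / (1 - p i)` the star–triangle
condition reads `r₀ r₁ + r₁ r₂ + r₂ r₀ + r₀ r₁ r₂ = 1`, and for `r i = sin b_i / sin (π/3 - b_i)`
this is a trigonometric identity for angles summing to `π / 3`: since `π/3 - b₂ = b₀ + b₁`
etc., it reduces to `cos (b₀ + b₁ + b₂) = 1 / 2` together with `sin² + cos² = 1`.
-/

open Real

noncomputable def odds (p : ℝ) : ℝ := p / (1 - p)

lemma add_add_sub_mul_mul_eq_one_iff_odds {p₀ p₁ p₂ : ℝ} (h₀ : p₀ ≠ 1) (h₁ : p₁ ≠ 1)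
    (h₂ : p₂ ≠ 1) :
    p₀ + p₁ + p₂ - p₀ * p₁ * p₂ = 1 ↔
      odds p₀ * odds p₁ + odds p₁ * odds p₂ + odds p₂ * odds p₀
        + odds p₀ * odds p₁ * odds p₂ = 1 := by
  have h₀' : 1 - p₀ ≠ 0 := sub_ne_zero.mpr h₀.symm
  have h₁' : 1 - p₁ ≠ 0 := sub_ne_zero.mpr h₁.symm
  have h₂' : 1 - p₂ ≠ 0 := sub_ne_zero.mpr h₂.symm
  have factor : p₀ + p₁ + p₂ - p₀ * p₁ * p₂ - 1 = (1 - p₀) * (1 - p₁) * (1 - p₂) *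
      (odds p₀ * odds p₁ + odds p₁ * odds p₂ + odds p₂ * odds p₀
        + odds p₀ * odds p₁ * odds p₂ - 1) := by
    unfold odds
    field_simp
    ring
  rw [← sub_eq_zero, factor, ← sub_eq_zero (b := (1 : ℝ))]
  simp [h₀', h₁', h₂']

lemma sin_star_triangle_identity {b₀ b₁ b₂ : ℝ} (h : b₀ + b₁ + b₂ = π / 3) :
    sin b₀ * sin b₁ * sin (π / 3 - b₂) + sin b₁ * sin b₂ * sin (π / 3 - b₀)
      + sin b₂ * sin b₀ * sin (π / 3 - b₁) + sin b₀ * sin b₁ * sin b₂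
      = sin (π / 3 - b₀) * sin (π / 3 - b₁) * sin (π / 3 - b₂) := by
  have hcos : cos (b₀ + (b₁ + b₂)) = 1 / 2 := by
    rw [← add_assoc, h, cos_pi_div_three]
  rw [show π / 3 - b₀ = b₁ + b₂ by linarith, show π / 3 - b₁ = b₀ + b₂ by linarith,
    show π / 3 - b₂ = b₀ + b₁ by linarith]
  simp only [sin_add, cos_add] at hcos ⊢
  linear_combination
    (-(sin b₁ * sin b₂ ^ 2 * cos b₁) - sin b₁ ^ 2 * sin b₂ * cos b₂) * sin_sq_add_cos_sq b₀
    + (-(sin b₀ * sin b₂ ^ 2 * cos b₀) - sin b₀ ^ 2 * sin b₂ * cos b₂) * sin_sq_add_cos_sq b₁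
    + (-(sin b₀ * sin b₁ ^ 2 * cos b₀) - sin b₀ ^ 2 * sin b₁ * cos b₁) * sin_sq_add_cos_sq b₂
    - 2 * sin b₀ * sin b₁ * sin b₂ * hcos

lemma sin_div_sin_pi_div_three_sub_star_triangle {b₀ b₁ b₂ : ℝ} (h : b₀ + b₁ + b₂ = π / 3)
    (h₀ : sin (π / 3 - b₀) ≠ 0) (h₁ : sin (π / 3 - b₁) ≠ 0) (h₂ : sin (π / 3 - b₂) ≠ 0) :
    sin b₀ / sin (π / 3 - b₀) * (sin b₁ / sin (π / 3 - b₁))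
      + sin b₁ / sin (π / 3 - b₁) * (sin b₂ / sin (π / 3 - b₂))
      + sin b₂ / sin (π / 3 - b₂) * (sin b₀ / sin (π / 3 - b₀))
      + sin b₀ / sin (π / 3 - b₀) * (sin b₁ / sin (π / 3 - b₁)) * (sin b₂ / sin (π / 3 - b₂))
      = 1 := by
  have key := sin_star_triangle_identity h
  generalize sin (π / 3 - b₀) = c₀ at *
  generalize sin (π / 3 - b₁) = c₁ at *
  generalize sin (π / 3 - b₂) = c₂ at *
  field_simp
  linear_combination key

theorem isoradial_star_triangle_condition_general (θ p : Fin 3 → ℝ)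
    (hsum : θ 0 + θ 1 + θ 2 = 2 * Real.pi)
    (hp : ∀ i, 0 < p i ∧ p i < 1)
    (hpe : ∀ i, p i / (1 - p i) =
      Real.sin ((Real.pi - θ i) / 3) / Real.sin (θ i / 3)) :
    p 0 + p 1 + p 2 - p 0 * p 1 * p 2 = 1 := by
  set b : Fin 3 → ℝ := fun i => (π - θ i) / 3 with hb_def
  have hb : b 0 + b 1 + b 2 = π / 3 := by simp only [hb_def]; linarith
  have hodds : ∀ i, odds (p i) = sin (b i) / sin (π / 3 - b i) := fun i => by
    rw [odds, hpe, hb_def]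
    ring_nf
  have hodds_pos : ∀ i, 0 < odds (p i) := fun i => div_pos (hp i).1 (sub_pos.mpr (hp i).2)
  have hden : ∀ i, sin (π / 3 - b i) ≠ 0 := fun i h => by
    simpa [hodds, h] using hodds_pos i
  rw [add_add_sub_mul_mul_eq_one_iff_odds (hp 0).2.ne (hp 1).2.ne (hp 2).2.ne]
  simp only [hodds]
  exact sin_div_sin_pi_div_three_sub_star_triangle hb (hden 0) (hden 1) (hden 2)

/-- **Isoradial edge-probabilities satisfy the star–triangle condition.**
If `θ 0, θ 1, θ 2 ∈ (0, π)` sum to `2π` and each `p i ∈ (0,1)` satisfies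
`p i / (1 - p i) = sin((π - θ i)/3) / sin(θ i / 3)`, then
`p 0 + p 1 + p 2 - p 0 * p 1 * p 2 = 1`. -/
theorem isoradial_star_triangle_condition (θ p : Fin 3 → ℝ)
    (hθ : ∀ i, 0 < θ i ∧ θ i < Real.pi)
    (hsum : θ 0 + θ 1 + θ 2 = 2 * Real.pi)
    (hp : ∀ i, 0 < p i ∧ p i < 1)
    (hpe : ∀ i, p i / (1 - p i) =
      Real.sin ((Real.pi - θ i) / 3) / Real.sin (θ i / 3)) :
    p 0 + p 1 + p 2 - p 0 * p 1 * p 2 = 1 :=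
  isoradial_star_triangle_condition_general θ p hsum hp hpe
end

section
/- Let 1 ≤ q < 4 and let σ ∈ (0,1) satisfy cos(σπ/2) = √q/2. Let θ0, θ1, θ2 ∈ (0,π) with θ0 + θ1 + θ2 = 2π, and define y_i = √q · sin(σ(π−θ_i)/2) / sin(σθ_i/2) for i = 0,1,2. Then y0·y1·y2 + y0·y1 + y1·y2 + y2·y0 = q. -/
/-!
Put `A, B, C = σ(π - θᵢ)/2`. Since the `θᵢ` sum to `2π`, each `σθᵢ/2` is the sum of the other two
of `A, B, C`, and `A + B + C = σπ/2`, so `√q = 2 cos (A + B + C)`. Clearing denominators, the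
star–triangle relation becomes the trigonometric identity
`sin (B+C) sin (C+A) sin (A+B) = 2 cos (A+B+C) sin A sin B sin C + Σ sin A sin B sin (A+B)`.
-/

open Real

theorem sin_add_mul_sin_add_mul_sin_add (A B C : ℝ) :
    sin (B + C) * sin (C + A) * sin (A + B) =
      2 * cos (A + B + C) * (sin A * sin B * sin C)
        + sin A * sin B * sin (A + B) + sin B * sin C * sin (B + C)
        + sin C * sin A * sin (C + A) := by
  simp only [sin_add, cos_add]
  linear_combination
    (sin B ^ 2 * sin C * cos C + sin B * sin C ^ 2 * cos B) * sin_sq_add_cos_sq A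
    + (sin A * sin C ^ 2 * cos A + sin A ^ 2 * sin C * cos C) * sin_sq_add_cos_sq B
    + (sin A ^ 2 * sin B * cos B + sin A * sin B ^ 2 * cos A) * sin_sq_add_cos_sq C

theorem star_triangle_of_sin_ratios {A B C s y₀ y₁ y₂ : ℝ} (hs : s = 2 * cos (A + B + C))
    (hA : sin (B + C) ≠ 0) (hB : sin (C + A) ≠ 0) (hC : sin (A + B) ≠ 0)
    (hy₀ : y₀ = s * sin A / sin (B + C)) (hy₁ : y₁ = s * sin B / sin (C + A))
    (hy₂ : y₂ = s * sin C / sin (A + B)) :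
    y₀ * y₁ * y₂ + y₀ * y₁ + y₁ * y₂ + y₂ * y₀ = s ^ 2 := by
  subst hy₀ hy₁ hy₂ hs
  field_simp
  linear_combination (-cos (A + B + C) ^ 2) * sin_add_mul_sin_add_mul_sin_add A B C

theorem sin_mul_half_pos {σ θ : ℝ} (hσ0 : 0 < σ) (hσ2 : σ ≤ 2) (hθ0 : 0 < θ) (hθπ : θ < π) :
    0 < sin (σ * θ / 2) := by
  apply sin_pos_of_pos_of_lt_pi (by positivity)
  nlinarith [mul_lt_mul_of_pos_left hθπ hσ0, pi_pos]

theorem isoradial_rc_star_triangle_small_q_general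
    (q : ℝ) (hq1 : 1 ≤ q)
    (σ : ℝ) (hσ0 : 0 < σ) (hσ1 : σ < 1)
    (hcos : Real.cos (σ * Real.pi / 2) = Real.sqrt q / 2)
    (θ : Fin 3 → ℝ) (hθ : ∀ i, 0 < θ i ∧ θ i < Real.pi)
    (hsum : θ 0 + θ 1 + θ 2 = 2 * Real.pi)
    (y : Fin 3 → ℝ)
    (hy : ∀ i, y i = Real.sqrt q *
      Real.sin (σ * (Real.pi - θ i) / 2) / Real.sin (σ * θ i / 2)) :
    y 0 * y 1 * y 2 + y 0 * y 1 + y 1 * y 2 + y 2 * y 0 = q := by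
  set A := σ * (π - θ 0) / 2
  set B := σ * (π - θ 1) / 2
  set C := σ * (π - θ 2) / 2
  have h₀ : σ * θ 0 / 2 = B + C := by linear_combination σ / 2 * hsum
  have h₁ : σ * θ 1 / 2 = C + A := by linear_combination σ / 2 * hsum
  have h₂ : σ * θ 2 / 2 = A + B := by linear_combination σ / 2 * hsum
  have hs : √q = 2 * cos (A + B + C) := by
    rw [show A + B + C = σ * π / 2 by linear_combination -σ / 2 * hsum, hcos]; ring
  have hsin (i : Fin 3) : sin (σ * θ i / 2) ≠ 0 :=
    (sin_mul_half_pos hσ0 (by linarith) (hθ i).1 (hθ i).2).ne'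
  rw [← sq_sqrt (by linarith : 0 ≤ q)]
  exact star_triangle_of_sin_ratios hs (h₀ ▸ hsin 0) (h₁ ▸ hsin 1) (h₂ ▸ hsin 2)
    (h₀ ▸ hy 0) (h₁ ▸ hy 1) (h₂ ▸ hy 2)

/-- **The isoradial random-cluster parametrization for `1 ≤ q < 4` satisfies the
star–triangle condition.** Let `1 ≤ q < 4`, let `σ ∈ (0,1)` satisfy
`cos(σπ/2) = √q/2`, let `θ 0, θ 1, θ 2 ∈ (0,π)` sum to `2π`, and set
`y i = √q · sin(σ(π−θᵢ)/2) / sin(σθᵢ/2)`. Then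
`y0 y1 y2 + y0 y1 + y1 y2 + y2 y0 = q`. -/
theorem isoradial_rc_star_triangle_small_q
    (q : ℝ) (hq1 : 1 ≤ q) (hq4 : q < 4)
    (σ : ℝ) (hσ0 : 0 < σ) (hσ1 : σ < 1)
    (hcos : Real.cos (σ * Real.pi / 2) = Real.sqrt q / 2)
    (θ : Fin 3 → ℝ) (hθ : ∀ i, 0 < θ i ∧ θ i < Real.pi)
    (hsum : θ 0 + θ 1 + θ 2 = 2 * Real.pi)
    (y : Fin 3 → ℝ)
    (hy : ∀ i, y i = Real.sqrt q *
      Real.sin (σ * (Real.pi - θ i) / 2) / Real.sin (σ * θ i / 2)) :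
    y 0 * y 1 * y 2 + y 0 * y 1 + y 1 * y 2 + y 2 * y 0 = q :=
  isoradial_rc_star_triangle_small_q_general q hq1 σ hσ0 hσ1 hcos θ hθ hsum y hy
end

section
/- Let q > 4 and let σ > 0 satisfy cosh(σπ/2) = √q/2. Let θ0, θ1, θ2 ∈ (0,π) with θ0 + θ1 + θ2 = 2π, and define y_i = √q · sinh(σ(π−θ_i)/2) / sinh(σθ_i/2) for i = 0,1,2. Then y0·y1·y2 + y0·y1 + y1·y2 + y2·y0 = q. -/
/-! Put `s = σπ/2`, `aᵢ = σθᵢ/2`, so that `√q = 2 cosh s` and `a₀ + a₁ + a₂ = 2s`. In the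
exponential variables `T = e^{2s}`, `Xᵢ = e^{2aᵢ}` the weights become the rational functions
`yᵢ = (T + 1)(T - Xᵢ) / (T (Xᵢ - 1))`, `q = (T + 1)² / T`, and the angle condition becomes
`X₀ X₁ X₂ = T²`. After clearing denominators the star–triangle polynomial is
`-(T² - 1)² (X₀ X₁ X₂ - T²)`, which vanishes. -/

open Real

/-- The star–triangle polynomial `ψ`. -/
def starTriangle (q y₀ y₁ y₂ : ℝ) : ℝ := y₀ * y₁ * y₂ + y₀ * y₁ + y₁ * y₂ + y₂ * y₀ - q

noncomputable def ratWeight (T X : ℝ) : ℝ := (T + 1) * (T - X) / (T * (X - 1))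

theorem starTriangle_ratWeight {T A B C : ℝ} (hT : T ≠ 0) (hA : A ≠ 1) (hB : B ≠ 1)
    (hC : C ≠ 1) (hABC : A * B * C = T ^ 2) :
    starTriangle ((T + 1) ^ 2 / T) (ratWeight T A) (ratWeight T B) (ratWeight T C) = 0 := by
  have hA' : A - 1 ≠ 0 := sub_ne_zero.mpr hA
  have hB' : B - 1 ≠ 0 := sub_ne_zero.mpr hB
  have hC' : C - 1 ≠ 0 := sub_ne_zero.mpr hC
  simp only [starTriangle, ratWeight]
  field_simp
  linear_combination -(T ^ 2 - 1) ^ 2 * hABC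

noncomputable def hypWeight (s a : ℝ) : ℝ := 2 * cosh s * sinh (s - a) / sinh a

theorem hypWeight_eq_ratWeight (s a : ℝ) :
    hypWeight s a = ratWeight (exp s ^ 2) (exp a ^ 2) := by
  have hs := (exp_pos s).ne'
  have ha := (exp_pos a).ne'
  rw [hypWeight, ratWeight, cosh_eq, sinh_eq, sinh_eq, exp_neg, exp_neg, exp_neg, exp_sub]
  field_simp

theorem exp_sq_ne_one {a : ℝ} (ha : a ≠ 0) : exp a ^ 2 ≠ 1 := by
  rwa [Ne, pow_eq_one_iff_of_nonneg (exp_pos a).le two_ne_zero, exp_eq_one_iff]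

theorem starTriangle_hypWeight {s a b c : ℝ} (ha : a ≠ 0) (hb : b ≠ 0) (hc : c ≠ 0)
    (habc : a + b + c = 2 * s) :
    starTriangle ((2 * cosh s) ^ 2) (hypWeight s a) (hypWeight s b) (hypWeight s c) = 0 := by
  have hT : exp s ^ 2 ≠ 0 := by positivity
  have hq : (2 * cosh s) ^ 2 = (exp s ^ 2 + 1) ^ 2 / exp s ^ 2 := by
    rw [cosh_eq, exp_neg]
    field_simp
  have hprod : exp a ^ 2 * exp b ^ 2 * exp c ^ 2 = (exp s ^ 2) ^ 2 := by
    simp only [← exp_nat_mul, ← exp_add]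
    congr 1
    push_cast
    linear_combination 2 * habc
  simp only [hq, hypWeight_eq_ratWeight]
  exact starTriangle_ratWeight hT (exp_sq_ne_one ha) (exp_sq_ne_one hb) (exp_sq_ne_one hc) hprod

/-- **The isoradial random-cluster parametrization for `q > 4` satisfies the
star–triangle condition.** Let `q > 4`, let `σ > 0` satisfy
`cosh(σπ/2) = √q/2`, let `θ 0, θ 1, θ 2 ∈ (0,π)` sum to `2π`, and set
`y i = √q · sinh(σ(π−θᵢ)/2) / sinh(σθᵢ/2)`. Then
`y0 y1 y2 + y0 y1 + y1 y2 + y2 y0 = q`. -/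
theorem isoradial_rc_star_triangle_large_q
    (q : ℝ) (hq : 4 < q)
    (σ : ℝ) (hσ : 0 < σ)
    (hcosh : Real.cosh (σ * Real.pi / 2) = Real.sqrt q / 2)
    (θ : Fin 3 → ℝ) (hθ : ∀ i, 0 < θ i ∧ θ i < Real.pi)
    (hsum : θ 0 + θ 1 + θ 2 = 2 * Real.pi)
    (y : Fin 3 → ℝ)
    (hy : ∀ i, y i = Real.sqrt q *
      Real.sinh (σ * (Real.pi - θ i) / 2) / Real.sinh (σ * θ i / 2)) :
    y 0 * y 1 * y 2 + y 0 * y 1 + y 1 * y 2 + y 2 * y 0 = q := by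
  have hsqrt : √q = 2 * cosh (σ * π / 2) := by linarith
  have hq_cosh : q = (2 * cosh (σ * π / 2)) ^ 2 := by
    rw [← hsqrt, sq_sqrt (by linarith)]
  have hy_hyp : ∀ i, y i = hypWeight (σ * π / 2) (σ * θ i / 2) := fun i => by
    rw [hy i, hsqrt, hypWeight, show σ * (π - θ i) / 2 = σ * π / 2 - σ * θ i / 2 by ring]
  have ha : ∀ i, σ * θ i / 2 ≠ 0 := fun i => by have := (hθ i).1; positivity
  have hψ := starTriangle_hypWeight (ha 0) (ha 1) (ha 2)
    (by linear_combination σ / 2 * hsum : σ * θ 0 / 2 + σ * θ 1 / 2 + σ * θ 2 / 2 = 2 * (σ * π / 2))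
  rw [starTriangle, ← hy_hyp, ← hy_hyp, ← hy_hyp, ← hq_cosh] at hψ
  linarith
end
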